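/- arXiv:1102.2878 — 2 statements merged into one kernel-verified Lean document; each statement's English description precedes it below -/
import Mathlib

section
/- For every t, s ∈ ℝ, e^{−(t−s)²} = Σ_{n=0}^{∞} (sⁿ/n!) hₙ(t), where the series converges. -/
/-!
The Gaussian `z ↦ exp (-z²)` is entire, so its Taylor series at `t` converges to it everywhere;
at the point `t - s` its `n`-th term is `(-s)ⁿ/n! · (dⁿ/dtⁿ) e^{-t²} = sⁿ/n! · hₙ(t)`, because an
entire function that is real on `ℝ` has, at real points, the complex derivatives of its
restriction to `ℝ`.
-/

open Complex

/-- The `n`-th Hermite function: `hₙ(t) = (−1)ⁿ (dⁿ/dtⁿ) e^{−t²}`. -/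
noncomputable def hermiteFun (n : ℕ) (t : ℝ) : ℝ :=
  (-1 : ℝ) ^ n * iteratedDeriv n (fun x => Real.exp (-x ^ 2)) t

theorem ofReal_iteratedDeriv_of_differentiable {f : ℂ → ℂ} {g : ℝ → ℝ} (hf : Differentiable ℂ f)
    (hfg : ∀ x : ℝ, f x = g x) (n : ℕ) (x : ℝ) :
    ((iteratedDeriv n g x : ℝ) : ℂ) = iteratedDeriv n f x := by
  induction n generalizing f g with
  | zero => simp [hfg]
  | succ n ih =>
    rw [iteratedDeriv_succ', iteratedDeriv_succ']
    refine ih hf.deriv fun y => ?_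
    have hf' : HasDerivAt (fun y : ℝ => (g y : ℂ)) (deriv f y) y := by
      simpa only [hfg] using (hf y).hasDerivAt.comp_ofReal
    have hg : HasDerivAt g (deriv f y).re y := by
      simpa only [hfg, ofReal_re] using (hf y).hasDerivAt.real_of_complex
    rw [hg.deriv]
    exact hf'.unique hg.ofReal_comp

theorem differentiable_cexp_neg_sq : Differentiable ℂ fun z : ℂ => exp (-z ^ 2) :=
  ((differentiable_pow 2).neg).cexp

theorem ofReal_iteratedDeriv_exp_neg_sq (n : ℕ) (x : ℝ) :
    ((iteratedDeriv n (fun x => Real.exp (-x ^ 2)) x : ℝ) : ℂ)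
      = iteratedDeriv n (fun z : ℂ => exp (-z ^ 2)) x :=
  ofReal_iteratedDeriv_of_differentiable differentiable_cexp_neg_sq
    (fun y => by push_cast; rfl) n x

/-- `e^{−(t−s)²} = Σ_{n=0}^{∞} (sⁿ/n!) hₙ(t)`, the series converging. -/
theorem hermite_function_expansion (t s : ℝ) :
    HasSum (fun n : ℕ => s ^ n / (Nat.factorial n : ℝ) * hermiteFun n t)
      (Real.exp (-(t - s) ^ 2)) := by
  have taylor := hasSum_taylorSeries_of_entire differentiable_cexp_neg_sq (t : ℂ) ((t - s : ℝ) : ℂ)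
  have term_eq (n : ℕ) : ((s ^ n / n.factorial * hermiteFun n t : ℝ) : ℂ)
      = (n.factorial : ℂ)⁻¹ • ((t - s : ℝ) - (t : ℂ)) ^ n
          • iteratedDeriv n (fun z : ℂ => exp (-z ^ 2)) t := by
    simp only [hermiteFun, ofReal_mul, ofReal_iteratedDeriv_exp_neg_sq, smul_eq_mul]
    push_cast
    ring
  have sum_eq : ((Real.exp (-(t - s) ^ 2) : ℝ) : ℂ) = exp (-((t - s : ℝ) : ℂ) ^ 2) := by
    push_cast
    rfl
  rw [← hasSum_ofReal, sum_eq]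
  simpa only [term_eq] using taylor
end

section
/- Let D ≥ 1, h > 0, p ≥ 1 an integer, let c, c′ ∈ ℝᴰ, and let M_α ∈ ℝ be given for each multi-index α ∈ ℕᴰ with α[d] < p for all d. Define the re-centered moments M′_γ = Σ_{α ≤ γ componentwise, α[d] < p ∀d} (1/(γ − α)!) M_α ((c − c′)/√(2h²))^{γ−α} for each γ ∈ ℕᴰ. Then for every q ∈ ℝᴰ, the far-field-to-far-field translation identity holds: Σ_{α[d] < p ∀d} M_α h_α((q − c)/√(2h²)) = Σ_{γ ∈ ℕᴰ} M′_γ h_γ((q − c′)/√(2h²)), where the multi-index series on the right converges (the family is summable). -/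
/-!
Since `hₙ = (−1)ⁿ G⁽ⁿ⁾` for the Gaussian `G(t) = e^{−t²}`, which extends to the entire function
`e^{−z²}`, the Taylor series of `G⁽ⁿ⁾` at `y` converges everywhere; evaluated at `y − a` it reads
`hₙ(y − a) = Σₖ aᵏ/k! h_{n+k}(y)`. Multiplying these expansions over the coordinates and
substituting `γ = α + κ` expands each `h_α((q − c)/√(2h²))` in the `h_γ((q − c′)/√(2h²))`;
summing over the finitely many `α` gives the re-centered moments `M′_γ`.
-/

open Finset

/-- Multivariate Hermite function `h_α(x) = ∏_{d} h_{α[d]}(x[d])`. -/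
noncomputable def hermiteFunMulti {D : ℕ} (α : Fin D → ℕ) (x : Fin D → ℝ) : ℝ :=
  ∏ d, hermiteFun (α d) (x d)

/-- Multi-index factorial `α! = ∏_d (α[d])!`. -/
def mFactorial {D : ℕ} (α : Fin D → ℕ) : ℕ := ∏ d, Nat.factorial (α d)

/-- Multi-index power `x^α = ∏_d (x[d])^{α[d]}`. -/
def mPow {D : ℕ} (x : Fin D → ℝ) (α : Fin D → ℕ) : ℝ := ∏ d, (x d) ^ (α d)

section RealRestriction

variable {f : ℂ → ℂ} {g : ℝ → ℝ}

theorem deriv_ofReal_of_differentiable (hf : Differentiable ℂ f) (hfg : ∀ x : ℝ, f x = g x)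
    (x : ℝ) : deriv f x = deriv g x := by
  have hf' : HasDerivAt f (deriv f x) x := (hf x).hasDerivAt
  have hg_eq : (fun r : ℝ => (f r).re) = g := funext fun r => by simp [hfg]
  have hg : HasDerivAt g (deriv f x).re x := hg_eq ▸ hf'.real_of_complex
  have hreal : HasDerivAt (fun r : ℝ => (g r : ℂ)) (deriv f x) x := by
    simpa only [hfg] using hf'.comp_ofReal
  rw [hg.deriv, hreal.unique hg.ofReal_comp, Complex.ofReal_re]

theorem iteratedDeriv_ofReal_of_differentiable (hf : Differentiable ℂ f)
    (hfg : ∀ x : ℝ, f x = g x) (n : ℕ) (x : ℝ) :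
    iteratedDeriv n f x = iteratedDeriv n g x := by
  induction n generalizing f g with
  | zero => exact hfg x
  | succ n ih =>
    rw [iteratedDeriv_succ', iteratedDeriv_succ']
    exact ih hf.deriv (deriv_ofReal_of_differentiable hf hfg)

theorem hasSum_taylorSeries_ofReal_of_differentiable (hf : Differentiable ℂ f)
    (hfg : ∀ x : ℝ, f x = g x) (y b : ℝ) :
    HasSum (fun k : ℕ => b ^ k / k.factorial * iteratedDeriv k g y) (g (y + b)) := by
  have h := (Complex.hasSum_taylorSeries_of_entire hf y ↑(y + b)).mapL Complex.reCLM
  rw [hfg, Complex.reCLM_apply, Complex.ofReal_re] at h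
  convert h using 2 with k
  rw [iteratedDeriv_ofReal_of_differentiable hf hfg, smul_eq_mul, smul_eq_mul,
    Complex.ofReal_add, add_sub_cancel_left, Complex.reCLM_apply, ← Complex.ofReal_pow,
    ← Complex.ofReal_natCast, ← Complex.ofReal_inv, ← Complex.ofReal_mul, ← Complex.ofReal_mul,
    Complex.ofReal_re, div_eq_inv_mul, mul_assoc]

end RealRestriction

theorem iteratedDeriv_iteratedDeriv {𝕜 F : Type*} [NontriviallyNormedField 𝕜]
    [NormedAddCommGroup F] [NormedSpace 𝕜 F] (m n : ℕ) (f : 𝕜 → F) :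
    iteratedDeriv m (iteratedDeriv n f) = iteratedDeriv (n + m) f := by
  simp only [iteratedDeriv_eq_iterate, ← Function.iterate_add_apply, add_comm]

theorem hasSum_hermiteFun_sub (n : ℕ) (y a : ℝ) :
    HasSum (fun k : ℕ => a ^ k / k.factorial * hermiteFun (n + k) y) (hermiteFun n (y - a)) := by
  have hentire : Differentiable ℂ (fun z : ℂ => Complex.exp (-z ^ 2)) := by fun_prop
  have hreal : ∀ x : ℝ, Complex.exp (-(x : ℂ) ^ 2) = ((Real.exp (-x ^ 2) : ℝ) : ℂ) := by
    intro x; push_cast; rfl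
  have h := (hasSum_taylorSeries_ofReal_of_differentiable
    (hentire.contDiff.differentiable_iteratedDeriv' n)
    (iteratedDeriv_ofReal_of_differentiable hentire hreal n) y (-a)).mul_left ((-1) ^ n)
  rw [← sub_eq_add_neg] at h
  unfold hermiteFun
  convert h using 1
  · rfl
  · funext k
    rw [iteratedDeriv_iteratedDeriv, neg_pow, pow_add]
    ring

theorem hasSum_fin_pi_prod {β : Type*} {D : ℕ} {f : Fin D → β → ℝ} {a : Fin D → ℝ}
    (hf : ∀ d, HasSum (f d) (a d)) :
    HasSum (fun γ : Fin D → β => ∏ d, f d (γ d)) (∏ d, a d) := by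
  induction D with
  | zero => simp
  | succ D ih =>
    have htail := ih fun d : Fin D => hf d.succ
    -- in `ℝ` unconditional summability is absolute, which makes the product family summable
    have hsplit := (hf 0).mul htail <| summable_mul_of_summable_norm
      (g := fun κ : Fin D → β => ∏ d : Fin D, f d.succ (κ d))
      (summable_norm_iff.mpr (hf 0).summable) (summable_norm_iff.mpr htail.summable)
    have hcons : (fun γ : Fin (D + 1) → β => ∏ d, f d (γ d)) ∘ Fin.consEquiv (fun _ => β) =
        fun x => f 0 x.1 * ∏ d : Fin D, f d.succ (x.2 d) :=
      funext fun x => by simp [Fin.consEquiv, Fin.prod_univ_succ]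
    rw [Fin.prod_univ_succ, ← (Fin.consEquiv fun _ => β).hasSum_iff, hcons]
    exact hsplit

theorem hasSum_hermiteFunMulti_sub {D : ℕ} (α : Fin D → ℕ) (y A : Fin D → ℝ) :
    HasSum (fun γ : Fin D → ℕ =>
        (if ∀ d, α d ≤ γ d then
          mPow A (fun d => γ d - α d) / mFactorial (fun d => γ d - α d) else 0) *
          hermiteFunMulti γ y)
      (hermiteFunMulti α (y - A)) := by
  have hprod : HasSum (fun κ : Fin D → ℕ =>
      ∏ d, A d ^ κ d / (κ d).factorial * hermiteFun (α d + κ d) (y d))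
      (hermiteFunMulti α (y - A)) :=
    hasSum_fin_pi_prod (f := fun d k => A d ^ k / k.factorial * hermiteFun (α d + k) (y d))
      fun d => hasSum_hermiteFun_sub (α d) (y d) (A d)
  rw [← (add_right_injective α).hasSum_iff]
  · convert hprod using 1
    funext κ
    simp only [Function.comp_apply, Pi.add_apply, le_add_iff_nonneg_right, zero_le, implies_true,
      if_true, add_tsub_cancel_left, mPow, mFactorial, hermiteFunMulti, Nat.cast_prod,
      prod_mul_distrib, prod_div_distrib]
  · intro γ hγ
    rw [if_neg, zero_mul]
    exact fun hle => hγ ⟨γ - α, add_tsub_cancel_of_le hle⟩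

theorem farfield_to_farfield_translation_general (D : ℕ) (h : ℝ)
    (p : ℕ) (c c' : Fin D → ℝ)
    (M : (Fin D → Fin p) → ℝ)
    (M' : (Fin D → ℕ) → ℝ)
    (hM' : ∀ γ : Fin D → ℕ, M' γ =
      ∑ α : Fin D → Fin p,
        if ∀ d, (α d : ℕ) ≤ γ d then
          (1 / (mFactorial (fun d => γ d - (α d : ℕ)) : ℝ)) * M α *
            mPow (fun d => (c d - c' d) / Real.sqrt (2 * h ^ 2))
              (fun d => γ d - (α d : ℕ))
        else 0)
    (q : Fin D → ℝ) :
    HasSum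
      (fun γ : Fin D → ℕ =>
        M' γ * hermiteFunMulti γ (fun d => (q d - c' d) / Real.sqrt (2 * h ^ 2)))
      (∑ α : Fin D → Fin p, M α *
        hermiteFunMulti (fun d => (α d : ℕ))
          (fun d => (q d - c d) / Real.sqrt (2 * h ^ 2))) := by
  set s := Real.sqrt (2 * h ^ 2)
  have hshift : (fun d => (q d - c' d) / s) - (fun d => (c d - c' d) / s) =
      fun d => (q d - c d) / s := by
    funext d
    simp only [Pi.sub_apply]
    ring
  have hterms := hasSum_sum (s := univ) fun (α : Fin D → Fin p) _ =>
    (hasSum_hermiteFunMulti_sub (fun d => (α d : ℕ)) (fun d => (q d - c' d) / s)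
      (fun d => (c d - c' d) / s)).mul_left (M α)
  rw [hshift] at hterms
  have hcoef : ∀ γ : Fin D → ℕ, M' γ * hermiteFunMulti γ (fun d => (q d - c' d) / s) =
      ∑ α : Fin D → Fin p, M α * ((if ∀ d, (α d : ℕ) ≤ γ d then
        mPow (fun d => (c d - c' d) / s) (fun d => γ d - α d) / mFactorial (fun d => γ d - α d)
        else 0) * hermiteFunMulti γ (fun d => (q d - c' d) / s)) := by
    intro γ
    rw [hM', sum_mul]
    refine sum_congr rfl fun α _ => ?_
    split_ifs <;> ring
  simpa only [hcoef] using hterms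

/-- Far-field–to–far-field (F2F) translation operator for the Gaussian kernel:
given far-field coefficients `M_α` (for `α[d] < p`) centered at `c`, the
re-centered moments
`M′_γ = Σ_{α ≤ γ, α < p} (1/(γ−α)!) M_α ((c − c′)/√(2h²))^{γ−α}` satisfy
`Σ_{α < p} M_α h_α((q − c)/√(2h²)) = Σ_{γ ∈ ℕᴰ} M′_γ h_γ((q − c′)/√(2h²))`,
the right-hand family being summable. -/
theorem farfield_to_farfield_translation (D : ℕ) (hD : 1 ≤ D) (h : ℝ) (hh : 0 < h)
    (p : ℕ) (hp : 1 ≤ p) (c c' : Fin D → ℝ)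
    (M : (Fin D → Fin p) → ℝ)
    (M' : (Fin D → ℕ) → ℝ)
    (hM' : ∀ γ : Fin D → ℕ, M' γ =
      ∑ α : Fin D → Fin p,
        if ∀ d, (α d : ℕ) ≤ γ d then
          (1 / (mFactorial (fun d => γ d - (α d : ℕ)) : ℝ)) * M α *
            mPow (fun d => (c d - c' d) / Real.sqrt (2 * h ^ 2))
              (fun d => γ d - (α d : ℕ))
        else 0)
    (q : Fin D → ℝ) :
    HasSum
      (fun γ : Fin D → ℕ =>
        M' γ * hermiteFunMulti γ (fun d => (q d - c' d) / Real.sqrt (2 * h ^ 2)))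
      (∑ α : Fin D → Fin p, M α *
        hermiteFunMulti (fun d => (α d : ℕ))
          (fun d => (q d - c d) / Real.sqrt (2 * h ^ 2))) :=
  farfield_to_farfield_translation_general D h p c c' M M' hM' q
end
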